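/- arXiv:1112.5383 — 4 statements merged into one kernel-verified Lean document; each statement's English description precedes it below -/
import Mathlib

section
/- Let n ≥ 3 and let λ, ν be partitions of n+1 with ν ≠ λ. If every partition obtained from ν by removing one box can also be obtained from λ by removing one box, then ν is rectangular (all nonzero parts of ν are equal). -/
/-- A partition, encoded as a weakly decreasing function `ℕ → ℕ` that is eventually zero. -/
def IsPartition (f : ℕ → ℕ) : Prop :=
  Antitone f ∧ ∃ N, ∀ i, N ≤ i → f i = 0

/-- The size of a partition: the sum of its parts. -/
noncomputable def psize (f : ℕ → ℕ) : ℕ := ∑ᶠ i, f i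

/-- `g` is obtained from `f` by removing one box: `g` is again a partition and
agrees with `f` except in one row where it is one less. -/
def RemoveBox (f g : ℕ → ℕ) : Prop :=
  IsPartition g ∧ ∃ i, f i = g i + 1 ∧ ∀ j, j ≠ i → f j = g j

/-- All nonzero parts are equal. -/
def Rectangular (f : ℕ → ℕ) : Prop :=
  ∀ i j, f i ≠ 0 → f j ≠ 0 → f i = f j

/-!
A non-rectangular `ν` has removable boxes in two distinct rows `r ≠ M`. Since removing the box
in row `r` gives a partition covered by `λ`, either `λ = ν` or `λ r = ν r - 1`; removing the box in
row `M` instead leaves row `r` intact, so `λ r ≥ ν r`. Hence `λ = ν`.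
-/

open Function

lemma exists_succ_lt_of_lt {α : Type*} [LinearOrder α] {f : ℕ → α} {a b : ℕ} (hab : a ≤ b)
    (h : f b < f a) : ∃ c, a ≤ c ∧ c < b ∧ f (c + 1) < f c := by
  induction b, hab using Nat.le_induction with
  | base => exact absurd h (lt_irrefl _)
  | succ b hab ih =>
    by_cases hb : f (b + 1) < f b
    · exact ⟨b, hab, b.lt_succ_self, hb⟩
    · obtain ⟨c, hac, hcb, hc⟩ := ih ((not_lt.1 hb).trans_lt h)
      exact ⟨c, hac, hcb.trans b.lt_succ_self, hc⟩

lemma IsPartition.exists_two_corners {nu : ℕ → ℕ} (hnu : IsPartition nu)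
    (hnu_rect : ¬ Rectangular nu) :
    ∃ r M, r ≠ M ∧ nu (r + 1) < nu r ∧ nu (M + 1) < nu M := by
  obtain ⟨hanti, N, hN⟩ := hnu
  obtain ⟨i, j, hlt, hj⟩ : ∃ i j, nu j < nu i ∧ nu j ≠ 0 := by
    simp only [Rectangular, not_forall] at hnu_rect
    obtain ⟨i, j, hi, hj, hij⟩ := hnu_rect
    rcases lt_or_gt_of_ne hij with h | h
    · exact ⟨j, i, h, hi⟩
    · exact ⟨i, j, h, hj⟩
  have hij : i ≤ j := le_of_lt (hanti.reflect_lt hlt)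
  have hjN : j ≤ N := by
    by_contra! hNj
    exact hj (hN j hNj.le)
  obtain ⟨r, -, hrj, hr⟩ := exists_succ_lt_of_lt hij hlt
  obtain ⟨M, hjM, -, hM⟩ :=
    exists_succ_lt_of_lt (f := nu) hjN (by rw [hN N le_rfl]; exact Nat.pos_of_ne_zero hj)
  exact ⟨r, M, by omega, hr, hM⟩

lemma IsPartition.removeBox_update {nu : ℕ → ℕ} (hnu : IsPartition nu) {c : ℕ}
    (hc : nu (c + 1) < nu c) : RemoveBox nu (update nu c (nu c - 1)) := by
  obtain ⟨hanti, N, hN⟩ := hnu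
  refine ⟨⟨fun x y hxy => ?_, max N (c + 1), fun i hi => ?_⟩, c, ?_, fun j hj => ?_⟩
  · rcases eq_or_ne x c with rfl | hx <;> rcases eq_or_ne y x with rfl | hy
    · exact le_rfl
    · simpa [update_of_ne hy] using Nat.le_sub_one_of_lt
        ((hanti (Nat.succ_le_of_lt (lt_of_le_of_ne hxy (Ne.symm hy)))).trans_lt hc)
    · rfl
    · rcases eq_or_ne y c with rfl | hyc
      · simpa [update_of_ne hx] using (Nat.sub_le _ _).trans (hanti hxy)
      · simpa [update_of_ne hx, update_of_ne hyc] using hanti hxy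
  · rw [update_of_ne (by omega)]
    exact hN i (le_of_max_le_left hi)
  · simp only [update_self]
    omega
  · exact (update_of_ne hj _ _).symm

lemma RemoveBox.apply_le {f g : ℕ → ℕ} (h : RemoveBox f g) (j : ℕ) : g j ≤ f j := by
  obtain ⟨-, i, hi, hne⟩ := h
  rcases eq_or_ne j i with rfl | hj
  · omega
  · exact (hne j hj).ge

lemma eq_of_removeBox_update {lam nu : ℕ → ℕ} {c : ℕ}
    (h : RemoveBox lam (update nu c (nu c - 1))) (hc : nu c ≠ 0) (hle : nu c ≤ lam c) :
    lam = nu := by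
  obtain ⟨-, k, hk, hne⟩ := h
  have hkc : k = c := by
    by_contra hkc
    rw [hne c (Ne.symm hkc), update_self] at hle
    omega
  subst hkc
  funext j
  rcases eq_or_ne j k with rfl | hj
  · rw [hk, update_self]
    omega
  · rw [hne j hj, update_of_ne hj]

theorem stmt1_general (lam nu : ℕ → ℕ)
    (hnu : IsPartition nu) (hne : nu ≠ lam)
    (h : ∀ g, RemoveBox nu g → RemoveBox lam g) :
    Rectangular nu := by
  by_contra hrect
  obtain ⟨r, M, hrM, hr, hM⟩ := hnu.exists_two_corners hrect
  have hle : nu r ≤ lam r := by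
    simpa [update_of_ne hrM] using (h _ (hnu.removeBox_update hM)).apply_le r
  exact hne (eq_of_removeBox_update (h _ (hnu.removeBox_update hr)) (by omega) hle).symm

/-- If `n ≥ 3`, `λ ≠ ν` are partitions of `n+1` and every partition obtained from `ν`
by removing one box is also obtained from `λ` by removing one box, then `ν` is rectangular. -/
theorem stmt1 (n : ℕ) (hn : 3 ≤ n) (lam nu : ℕ → ℕ)
    (hlam : IsPartition lam) (hnu : IsPartition nu)
    (hslam : psize lam = n + 1) (hsnu : psize nu = n + 1) (hne : nu ≠ lam)
    (h : ∀ g, RemoveBox nu g → RemoveBox lam g) :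
    Rectangular nu :=
  stmt1_general lam nu hnu hne h
end

section
/- The d-core of a partition is well defined: if λ is a partition and any maximal sequence of removals of d-hooks is performed (repeatedly removing rim d-hooks until no cell has hook length d), the resulting partition is independent of the choice of removals. -/
/-- `X` is the β-set of size `s` of the partition `f`. -/
def HasBetaSet (f : ℕ → ℕ) (s : ℕ) (X : Finset ℕ) : Prop :=
  IsPartition f ∧ (∀ i, s ≤ i → f i = 0) ∧
    X = (Finset.range s).image (fun i => f i + (s - 1 - i))

/-- Removal of a rim `d`-hook, on β-sets: replace some `x ∈ X` with `x ≥ d`,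
`x - d ∉ X`, by `x - d`. -/
def HookStep (d : ℕ) (X Y : Finset ℕ) : Prop :=
  ∃ x ∈ X, d ≤ x ∧ x - d ∉ X ∧ Y = insert (x - d) (X.erase x)

/-!
A hook step moves one bead of the `d`-abacus one position up its runner (residue class
mod `d`), so the number of beads on each runner is invariant. When no step is possible, the
beads on every runner are packed without gaps, so a terminal β-set is determined by these
counts. Finally, a β-set of fixed size determines its partition, since the β-numbers of a
partition form a strictly decreasing sequence.
-/

open Finset

lemma HookStep.card_filter_mod_eq {d : ℕ} {X Y : Finset ℕ} (h : HookStep d X Y) (r : ℕ) :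
    #(Y.filter (· % d = r)) = #(X.filter (· % d = r)) := by
  obtain ⟨x, hx, hdx, hxd, rfl⟩ := h
  have hmod : (x - d) % d = x % d := by
    conv_rhs => rw [show x = x - d + d by omega, Nat.add_mod_right]
  rw [filter_insert, filter_erase, hmod]
  by_cases hr : x % d = r
  · have hx' : x ∈ X.filter (· % d = r) := mem_filter.mpr ⟨hx, hr⟩
    have hxd' : x - d ∉ (X.filter (· % d = r)).erase x :=
      fun h => hxd (mem_of_mem_filter _ (mem_of_mem_erase h))
    rw [if_pos hr, card_insert_of_notMem hxd', card_erase_add_one hx']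
  · rw [if_neg hr, erase_eq_of_notMem (by simp [hr])]

lemma card_filter_mod_eq_of_reflTransGen {d : ℕ} {X Z : Finset ℕ}
    (h : Relation.ReflTransGen (HookStep d) X Z) (r : ℕ) :
    #(Z.filter (· % d = r)) = #(X.filter (· % d = r)) := by
  induction h with
  | refl => rfl
  | tail _ hstep ih => rw [hstep.card_filter_mod_eq, ih]

/-- On the `d`-abacus: no runner has a gap below a bead. -/
def SubClosed (d : ℕ) (Z : Finset ℕ) : Prop :=
  ∀ z ∈ Z, d ≤ z → z - d ∈ Z

lemma subClosed_of_forall_not_hookStep {d : ℕ} {Z : Finset ℕ} (h : ∀ W, ¬ HookStep d Z W) :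
    SubClosed d Z :=
  fun z hz hdz => by_contra fun hzd => h _ ⟨z, hz, hdz, hzd, rfl⟩

namespace SubClosed

variable {d : ℕ} {Z : Finset ℕ}

lemma sub_mul_mem (hZ : SubClosed d Z) {z : ℕ} (hz : z ∈ Z) (k : ℕ) (hk : d * k ≤ z) :
    z - d * k ∈ Z := by
  induction k with
  | zero => simpa using hz
  | succ k ih =>
    have h := hZ _ (ih (by nlinarith)) (by rw [Nat.mul_succ] at hk; omega)
    rwa [Nat.sub_sub, ← Nat.mul_succ] at h

lemma mem_of_mod_eq_of_le (hZ : SubClosed d Z) {x z : ℕ} (hz : z ∈ Z) (hmod : x % d = z % d)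
    (hle : x ≤ z) : x ∈ Z := by
  obtain ⟨k, hk⟩ : d ∣ z - x := (Nat.modEq_iff_dvd' hle).mp hmod
  simpa [← hk, Nat.sub_sub_self hle] using hZ.sub_mul_mem hz k (by omega)

lemma mem_iff_div_lt_card (hZ : SubClosed d Z) (x : ℕ) :
    x ∈ Z ↔ x / d < #(Z.filter (· % d = x % d)) := by
  have hdecomp := Nat.mod_add_div x d
  constructor
  · intro hx
    have hsub : (range (x / d + 1)).image (fun j => x % d + d * j) ⊆ Z.filter (· % d = x % d) := by
      intro y hy
      obtain ⟨j, hj, rfl⟩ := mem_image.mp hy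
      have hjx : d * j ≤ d * (x / d) := Nat.mul_le_mul_left d (by simpa [Nat.lt_succ_iff] using hj)
      have hmod : (x % d + d * j) % d = x % d := by simp
      exact mem_filter.mpr ⟨hZ.mem_of_mod_eq_of_le hx (by rw [hmod]) (by omega), hmod⟩
    have hinj : Set.InjOn (fun j => x % d + d * j) (range (x / d + 1)) := by
      intro a ha b hb hab
      rcases Nat.eq_zero_or_pos d with rfl | hd
      · simp_all
      · exact Nat.eq_of_mul_eq_mul_left hd (by simpa using hab)
    simpa [card_image_of_injOn hinj] using card_le_card hsub
  · intro hlt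
    by_contra hx
    have hsub : Z.filter (· % d = x % d) ⊆ (range (x / d)).image (fun j => x % d + d * j) := by
      intro y hy
      obtain ⟨hyZ, hymod⟩ := mem_filter.mp hy
      have hyx : y < x := lt_of_not_ge fun h => hx (hZ.mem_of_mod_eq_of_le hyZ hymod.symm h)
      have hy' := Nat.mod_add_div y d
      exact mem_image.mpr ⟨y / d, mem_range.mpr (Nat.lt_of_mul_lt_mul_left (a := d) (by omega)),
        by omega⟩
    exact absurd ((card_le_card hsub).trans card_image_le) (by simpa using hlt)

lemma eq_of_card_filter_mod_eq {Z₁ Z₂ : Finset ℕ} (h₁ : SubClosed d Z₁) (h₂ : SubClosed d Z₂)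
    (hcard : ∀ r, #(Z₁.filter (· % d = r)) = #(Z₂.filter (· % d = r))) : Z₁ = Z₂ := by
  ext x
  rw [h₁.mem_iff_div_lt_card, h₂.mem_iff_div_lt_card, hcard]

end SubClosed

lemma strictAnti_betaNumbers {g : ℕ → ℕ} (hg : Antitone g) (s : ℕ) :
    StrictAnti fun i : Fin s => g i + (s - 1 - i) := by
  intro i j hij
  have := hg (Fin.lt_def.mp hij).le
  have := j.isLt
  dsimp only
  omega

lemma HasBetaSet.range_eq {g : ℕ → ℕ} {s : ℕ} {Z : Finset ℕ} (h : HasBetaSet g s Z) :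
    Set.range (fun i : Fin s => g i + (s - 1 - i)) = Z := by
  ext z
  simp [h.2.2, Fin.exists_iff]

lemma HasBetaSet.unique {g₁ g₂ : ℕ → ℕ} {s : ℕ} {Z : Finset ℕ} (h₁ : HasBetaSet g₁ s Z)
    (h₂ : HasBetaSet g₂ s Z) : g₁ = g₂ := by
  have heq := ((strictAnti_betaNumbers h₁.1.1 s).range_inj (strictAnti_betaNumbers h₂.1.1 s)).mp
    (h₁.range_eq.trans h₂.range_eq.symm)
  funext i
  rcases Nat.lt_or_ge i s with hi | hi
  · simpa using congrFun heq ⟨i, hi⟩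
  · rw [h₁.2.1 i hi, h₂.2.1 i hi]

theorem stmt8_general (d : ℕ) (s : ℕ) (X : Finset ℕ) (Z₁ Z₂ : Finset ℕ)
    (h1 : Relation.ReflTransGen (HookStep d) X Z₁)
    (h2 : Relation.ReflTransGen (HookStep d) X Z₂)
    (t1 : ∀ W, ¬ HookStep d Z₁ W) (t2 : ∀ W, ¬ HookStep d Z₂ W) :
    Z₁ = Z₂ ∧
      ∀ g₁ g₂ : ℕ → ℕ, HasBetaSet g₁ s Z₁ → HasBetaSet g₂ s Z₂ → g₁ = g₂ := by
  have hZ : Z₁ = Z₂ :=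
    (subClosed_of_forall_not_hookStep t1).eq_of_card_filter_mod_eq
      (subClosed_of_forall_not_hookStep t2) fun r => by
        rw [card_filter_mod_eq_of_reflTransGen h1, card_filter_mod_eq_of_reflTransGen h2]
  refine ⟨hZ, fun g₁ g₂ hg₁ hg₂ => hg₁.unique ?_⟩
  rwa [hZ]

/-- The `d`-core is well defined: starting from (a β-set `X` of) a partition, any two
maximal sequences of rim `d`-hook removals end at the same β-set, hence at the same
partition. -/
theorem stmt8 (d : ℕ) (hd : 1 ≤ d) (f : ℕ → ℕ) (s : ℕ) (X : Finset ℕ)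
    (hf : HasBetaSet f s X) (Z₁ Z₂ : Finset ℕ)
    (h1 : Relation.ReflTransGen (HookStep d) X Z₁)
    (h2 : Relation.ReflTransGen (HookStep d) X Z₂)
    (t1 : ∀ W, ¬ HookStep d Z₁ W) (t2 : ∀ W, ¬ HookStep d Z₂ W) :
    Z₁ = Z₂ ∧
      ∀ g₁ g₂ : ℕ → ℕ, HasBetaSet g₁ s Z₁ → HasBetaSet g₂ s Z₂ → g₁ = g₂ :=
  stmt8_general d s X Z₁ Z₂ h1 h2 t1 t2
end

section
/- For integers n ≥ 1 and 2 ≤ d ≤ n+1, the word s_1 s_2 ⋯ s_{n−⌊d/2⌋} · s_n s_{n−1} ⋯ s_{⌊(d+1)/2⌋} is a reduced expression in S_{n+1}; that is, the permutation it represents has Coxeter length exactly (n − ⌊d/2⌋) + (n + 1 − ⌊(d+1)/2⌋) = 2n + 1 − d. -/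
/-! The two halves of the word are the cycles `(0 1 ⋯ n-⌊d/2⌋)` and `(n n-1 ⋯ ⌈d/2⌉-1)`.
Their product sends position `p = ⌈d/2⌉-1` to the top value `n`, position `q = n-⌊d/2⌋+1`
to the bottom value `0`, and is increasing on the remaining positions. Hence the inversions
are exactly the pairs `i < j` with `i = p` or `j = q`, and there are
`(n - p) + (q - 1) = 2n + 1 - d` of them. -/

open Fin.NatCast in
/-- The element of `S_{n+1}` given by the word
`s_1 s_2 ⋯ s_{n-⌊d/2⌋} · s_n s_{n-1} ⋯ s_{⌊(d+1)/2⌋}`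
(0-indexed on `Fin (n+1)`, `s_i = swap (i-1) i`; the group product is taken in the
order of the word). -/
def vWord (n d : ℕ) : Equiv.Perm (Fin (n + 1)) :=
  (((List.range (n - d / 2)).map
      (fun j => Equiv.swap ((j : ℕ) : Fin (n + 1)) ((j + 1 : ℕ) : Fin (n + 1)))) ++
    ((List.range (n + 1 - (d + 1) / 2)).map
      (fun j => Equiv.swap ((n - 1 - j : ℕ) : Fin (n + 1)) ((n - j : ℕ) : Fin (n + 1))))).prod

/-- The number of inversions of a permutation, which equals its Coxeter length. -/
noncomputable def permLen {N : ℕ} (w : Equiv.Perm (Fin N)) : ℕ :=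
  Set.ncard {p : Fin N × Fin N | p.1 < p.2 ∧ w p.2 < w p.1}

open Fin.NatCast in
theorem prod_range_swap_succ_apply_val {n m : ℕ} (hm : m ≤ n) (x : Fin (n + 1)) :
    (((List.range m).map fun j =>
      Equiv.swap ((j : ℕ) : Fin (n + 1)) ((j + 1 : ℕ) : Fin (n + 1))).prod x : ℕ) =
      if (x : ℕ) < m then (x : ℕ) + 1 else if (x : ℕ) = m then 0 else (x : ℕ) := by
  induction m generalizing x with
  | zero =>
    simp only [List.range_zero, List.map_nil, List.prod_nil, Equiv.Perm.one_apply]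
    split_ifs <;> omega
  | succ m ih =>
    have hval : ((m : ℕ) : Fin (n + 1)).val = m := Fin.val_cast_of_lt (by omega)
    have hval1 : ((m + 1 : ℕ) : Fin (n + 1)).val = m + 1 := Fin.val_cast_of_lt (by omega)
    rw [List.range_succ, List.map_append, List.prod_append, List.map_singleton, List.prod_singleton,
      Equiv.Perm.mul_apply, ih (by omega), Equiv.swap_apply_def]
    simp only [Fin.ext_iff, hval, hval1]
    split_ifs <;> omega

open Fin.NatCast in
theorem prod_range_swap_pred_apply_val {n m : ℕ} (hm : m ≤ n) (x : Fin (n + 1)) :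
    (((List.range m).map fun j =>
      Equiv.swap ((n - 1 - j : ℕ) : Fin (n + 1)) ((n - j : ℕ) : Fin (n + 1))).prod x : ℕ) =
      if (x : ℕ) < n - m then (x : ℕ) else if (x : ℕ) = n - m then n else (x : ℕ) - 1 := by
  induction m generalizing x with
  | zero =>
    simp only [List.range_zero, List.map_nil, List.prod_nil, Equiv.Perm.one_apply]
    split_ifs <;> omega
  | succ m ih =>
    have hval : ((n - 1 - m : ℕ) : Fin (n + 1)).val = n - 1 - m := Fin.val_cast_of_lt (by omega)
    have hval1 : ((n - m : ℕ) : Fin (n + 1)).val = n - m := Fin.val_cast_of_lt (by omega)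
    rw [List.range_succ, List.map_append, List.prod_append, List.map_singleton, List.prod_singleton,
      Equiv.Perm.mul_apply, ih (by omega), Equiv.swap_apply_def]
    simp only [Fin.ext_iff, hval, hval1]
    have := x.isLt
    split_ifs <;> omega

theorem vWord_apply_val {n d : ℕ} (hd2 : 2 ≤ d) (hdn : d ≤ n + 1) (x : Fin (n + 1)) :
    (vWord n d x : ℕ) =
      if (x : ℕ) < (d + 1) / 2 - 1 then (x : ℕ) + 1
      else if (x : ℕ) = (d + 1) / 2 - 1 then (n : ℕ)
      else if (x : ℕ) ≤ n - d / 2 then (x : ℕ)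
      else if (x : ℕ) = n - d / 2 + 1 then 0
      else (x : ℕ) - 1 := by
  rw [vWord, List.prod_append, Equiv.Perm.mul_apply, prod_range_swap_succ_apply_val (by omega),
    prod_range_swap_pred_apply_val (by omega)]
  have := x.isLt
  split_ifs <;> omega

theorem inversions_eq_of_strictMonoOn {n : ℕ} (w : Equiv.Perm (Fin (n + 1))) {p q : Fin (n + 1)}
    (hpq : p < q) (hp : w p = Fin.last n) (hq : w q = 0) (hmono : StrictMonoOn w {p, q}ᶜ) :
    {x : Fin (n + 1) × Fin (n + 1) | x.1 < x.2 ∧ w x.2 < w x.1} =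
      {x | x.1 < x.2 ∧ (x.1 = p ∨ x.2 = q)} := by
  ext ⟨i, j⟩
  simp only [Set.mem_ofPred_eq, and_congr_right_iff]
  intro hij
  constructor
  · contrapose!
    rintro ⟨hip, hjq⟩
    by_cases hiq : i = q
    · exact hiq ▸ hq ▸ Fin.zero_le _
    by_cases hjp : j = p
    · exact hjp ▸ hp ▸ Fin.le_last _
    exact (hmono (by simp [hip, hiq]) (by simp [hjp, hjq]) hij).le
  · rintro (rfl | rfl)
    · rw [hp]
      exact Fin.lt_last_iff_ne_last.mpr fun h => hij.ne' (w.injective (h.trans hp.symm))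
    · rw [hq]
      exact Fin.pos_iff_ne_zero.mpr fun h => hij.ne (w.injective (h.trans hq.symm))

theorem ncard_pairs_fst_eq_or_snd_eq {n : ℕ} {p q : Fin (n + 1)} (hpq : p < q) :
    {x : Fin (n + 1) × Fin (n + 1) | x.1 < x.2 ∧ (x.1 = p ∨ x.2 = q)}.ncard =
      (n - p) + (q - 1) := by
  have hpairs : {x : Fin (n + 1) × Fin (n + 1) | x.1 < x.2 ∧ (x.1 = p ∨ x.2 = q)} =
      ↑((Finset.Ioi p).image (p, ·) ∪ ((Finset.Iio q).erase p).image (·, q)) := by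
    ext ⟨i, j⟩
    simp only [Set.mem_ofPred_eq, Finset.coe_union, Finset.coe_image, Finset.coe_Ioi,
      Finset.coe_erase, Finset.coe_Iio, Set.mem_union, Set.mem_image, Set.mem_Ioi, Prod.mk.injEq,
      exists_eq_right_right, Set.mem_sdiff, Set.mem_Iio, Set.mem_singleton_iff, ↓existsAndEq,
      true_and]
    grind
  rw [hpairs, Set.ncard_coe_finset, Finset.card_union_of_disjoint,
    Finset.card_image_of_injective _ (Prod.mk_right_injective p),
    Finset.card_image_of_injective _ (Prod.mk_left_injective q), Fin.card_Ioi,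
    Finset.card_erase_of_mem (Finset.mem_Iio.2 hpq), Fin.card_Iio]
  · omega
  · simp only [Finset.disjoint_left, Finset.mem_image, Finset.mem_erase]
    grind

theorem permLen_eq_of_strictMonoOn_compl {n : ℕ} (w : Equiv.Perm (Fin (n + 1)))
    {p q : Fin (n + 1)} (hpq : p < q) (hp : w p = Fin.last n) (hq : w q = 0)
    (hmono : StrictMonoOn w {p, q}ᶜ) :
    permLen w = (n - p) + (q - 1) := by
  rw [permLen, inversions_eq_of_strictMonoOn w hpq hp hq hmono, ncard_pairs_fst_eq_or_snd_eq hpq]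

theorem stmt18_general (n d : ℕ) (hd2 : 2 ≤ d) (hdn : d ≤ n + 1) :
    permLen (vWord n d) = 2 * n + 1 - d := by
  have hw := vWord_apply_val hd2 hdn
  obtain ⟨p, hp⟩ : ∃ p : Fin (n + 1), (p : ℕ) = (d + 1) / 2 - 1 := ⟨⟨_, by omega⟩, rfl⟩
  obtain ⟨q, hq⟩ : ∃ q : Fin (n + 1), (q : ℕ) = n - d / 2 + 1 := ⟨⟨_, by omega⟩, rfl⟩
  have hpq : p < q := Fin.lt_def.mpr (by omega)
  have hwp : vWord n d p = Fin.last n := Fin.ext (by rw [hw, Fin.val_last]; split_ifs <;> omega)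
  have hwq : vWord n d q = 0 := Fin.ext (by rw [hw, Fin.val_zero]; split_ifs <;> omega)
  have hmono : StrictMonoOn (vWord n d) {p, q}ᶜ := by
    intro i hi j hj hij
    simp only [Set.mem_compl_iff, Set.mem_insert_iff, Set.mem_singleton_iff, Fin.ext_iff] at hi hj
    rw [Fin.lt_def] at hij ⊢
    rw [hw, hw]
    split_ifs <;> omega
  rw [permLen_eq_of_strictMonoOn_compl _ hpq hwp hwq hmono]
  omega

/-- For `n ≥ 1` and `2 ≤ d ≤ n+1`, the word
`s_1 ⋯ s_{n-⌊d/2⌋} s_n ⋯ s_{⌊(d+1)/2⌋}` is reduced: the Coxeter length (= number of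
inversions) of the permutation it represents is exactly `2n + 1 - d`, the length of
the word. -/
theorem stmt18 (n d : ℕ) (hn : 1 ≤ n) (hd2 : 2 ≤ d) (hdn : d ≤ n + 1) :
    permLen (vWord n d) = 2 * n + 1 - d :=
  stmt18_general n d hd2 hdn
end

section
/- Let d ≥ 2, let μ be a partition with β-set X of size s, let x ∈ X with x + d ∉ X, and let λ = μ * x be the partition (of |μ| + d) with β-set Y = (X \ {x}) ∪ {x + d}. Then the partitions obtained from λ by removing one box are exactly those with β-set of one of the following forms: (i) (X \ {x}) ∪ {x + d − 1}, which occurs iff x + d − 1 ∉ X; (ii) (X \ {x+1}) ∪ {x + d}, which occurs iff x + 1 ∈ X; (iii) (X^{(j)} \ {x}) ∪ {x + d}, where X^{(j)} = (X \ {x_j}) ∪ {x_j − 1} for some x_j ∈ X with x_j ≥ 1, x_j − 1 ∉ X, x_j ≠ x and x_j ≠ x + d + 1. -/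
def betaSet (f : ℕ → ℕ) (s : ℕ) : Finset ℕ :=
  (Finset.range s).image fun i => f i + (s - 1 - i)

def IsRemovableBead (X : Finset ℕ) (y : ℕ) : Prop :=
  y ∈ X ∧ 1 ≤ y ∧ y - 1 ∉ X

def moveBeadDown (X : Finset ℕ) (y : ℕ) : Finset ℕ :=
  insert (y - 1) (X.erase y)

lemma Antitone.add_tsub_strictAntiOn {f : ℕ → ℕ} (hf : Antitone f) (s : ℕ) :
    StrictAntiOn (fun i => f i + (s - 1 - i)) (Set.Iio s) := by
  intro i _ j hj hij
  have := hf hij.le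
  simp only [Set.mem_Iio] at hj
  dsimp only
  omega

lemma coe_betaSet (f : ℕ → ℕ) (s : ℕ) :
    (betaSet f s : Set ℕ) = Set.range fun i : Fin s => f i + (s - 1 - i) := by
  ext a
  simp [betaSet, Fin.exists_iff]

lemma HasBetaSet.unique_s19 {g g' : ℕ → ℕ} {s : ℕ} {Z : Finset ℕ}
    (hg : HasBetaSet g s Z) (hg' : HasBetaSet g' s Z) : g = g' := by
  have hanti : ∀ {f : ℕ → ℕ}, Antitone f → StrictAnti fun i : Fin s => f i + (s - 1 - i) :=
    fun hf i j hij => hf.add_tsub_strictAntiOn s i.2 j.2 hij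
  have hrange := (hanti hg.1.1).range_inj (hanti hg'.1.1) |>.mp <| by
    rw [← coe_betaSet, ← coe_betaSet]
    exact congrArg _ (hg.2.2.symm.trans hg'.2.2)
  funext i
  by_cases hi : i < s
  · have := congrFun hrange ⟨i, hi⟩
    simp only at this
    omega
  · rw [hg.2.1 i (by omega), hg'.2.1 i (by omega)]

lemma IsPartition.update_pred {f : ℕ → ℕ} (hf : IsPartition f) {i : ℕ} (hi : f (i + 1) < f i) :
    IsPartition (Function.update f i (f i - 1)) := by
  obtain ⟨hanti, N, hN⟩ := hf
  refine ⟨antitone_nat_of_succ_le fun n => ?_, N, fun j hj => ?_⟩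
  · have : f (n + 1) ≤ f n := hanti (by omega)
    simp only [Function.update_apply]
    split_ifs <;> subst_vars <;> omega
  · have := hN j hj
    simp only [Function.update_apply]
    split_ifs <;> subst_vars <;> omega

lemma moveBeadDown_betaSet {f g : ℕ → ℕ} {s i : ℕ} (hf : Antitone f) (hi : i < s)
    (hfg : ∀ j, j ≠ i → f j = g j) (hstep : f i = g i + 1) :
    moveBeadDown (betaSet f s) (f i + (s - 1 - i)) = betaSet g s := by
  have hinj := (hf.add_tsub_strictAntiOn s).injOn
  ext a
  simp only [moveBeadDown, betaSet, Finset.mem_image, Finset.mem_insert, Finset.mem_erase,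
    Finset.mem_range]
  constructor
  · rintro (rfl | ⟨hne, j, hj, rfl⟩)
    · exact ⟨i, hi, by omega⟩
    · have hji : j ≠ i := by rintro rfl; exact hne rfl
      exact ⟨j, hj, by rw [hfg j hji]⟩
  · rintro ⟨j, hj, rfl⟩
    by_cases hji : j = i
    · subst hji; left; omega
    · refine .inr ⟨fun h => hji (hinj hj hi (by simpa [hfg j hji] using h)), j, hj, ?_⟩
      rw [hfg j hji]

lemma HasBetaSet.exists_isRemovableBead_of_removeBox {f g : ℕ → ℕ} {s : ℕ} {X : Finset ℕ}
    (hf : HasBetaSet f s X) (h : RemoveBox f g) :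
    ∃ y, IsRemovableBead X y ∧ HasBetaSet g s (moveBeadDown X y) := by
  obtain ⟨⟨hanti, -⟩, hf0, rfl⟩ := hf
  obtain ⟨hg, i, hstep, hfg⟩ := h
  have hi : i < s := by
    by_contra
    have := hf0 i (by omega)
    omega
  refine ⟨f i + (s - 1 - i), ⟨Finset.mem_image_of_mem _ (Finset.mem_range.2 hi), by omega, ?_⟩,
    hg, fun j hj => hfg j (by omega) ▸ hf0 j hj, moveBeadDown_betaSet hanti hi hfg hstep⟩
  simp only [Finset.mem_image, Finset.mem_range, not_exists, not_and]
  intro j hj hje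
  rcases lt_trichotomy j i with hji | rfl | hij
  · have := hanti.add_tsub_strictAntiOn s hj hi hji
    simp only at this
    omega
  · omega
  · have := hg.1 hij.le
    have := hfg j hij.ne'
    omega

lemma HasBetaSet.removeBox_of_isRemovableBead {f g : ℕ → ℕ} {s : ℕ} {X : Finset ℕ} {y : ℕ}
    (hf : HasBetaSet f s X) (hy : IsRemovableBead X y) (hg : HasBetaSet g s (moveBeadDown X y)) :
    RemoveBox f g := by
  obtain ⟨hyX, hy1, hy1X⟩ := hy
  obtain ⟨hfp, hf0, rfl⟩ := hf
  obtain ⟨i, hi, rfl⟩ := Finset.mem_image.1 hyX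
  rw [Finset.mem_range] at hi
  have hlt : f (i + 1) < f i := by
    rcases lt_or_ge (i + 1) s with hs | hs
    · by_contra
      have : f (i + 1) ≤ f i := hfp.1 (by omega)
      exact hy1X (Finset.mem_image.2 ⟨i + 1, Finset.mem_range.2 hs, by omega⟩)
    · rw [hf0 _ hs]
      omega
  have hupdate : HasBetaSet (Function.update f i (f i - 1)) s
      (moveBeadDown (betaSet f s) (f i + (s - 1 - i))) :=
    ⟨hfp.update_pred hlt,
      fun j hj => by rw [Function.update_of_ne (by omega)]; exact hf0 j hj,
      moveBeadDown_betaSet hfp.1 hi (fun j hj => (Function.update_of_ne hj _ _).symm)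
        (by rw [Function.update_self]; omega)⟩
  obtain rfl := hg.unique_s19 hupdate
  exact ⟨hupdate.1, i, by rw [Function.update_self]; omega,
    fun j hj => (Function.update_of_ne hj _ _).symm⟩

lemma HasBetaSet.removeBox_iff {f : ℕ → ℕ} {s : ℕ} {X : Finset ℕ} (hf : HasBetaSet f s X)
    (g : ℕ → ℕ) :
    RemoveBox f g ↔ ∃ y, IsRemovableBead X y ∧ HasBetaSet g s (moveBeadDown X y) :=
  ⟨hf.exists_isRemovableBead_of_removeBox, fun ⟨_, hy, hg⟩ => hf.removeBox_of_isRemovableBead hy hg⟩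

section
variable {X : Finset ℕ} {x d : ℕ}

lemma isRemovableBead_top_iff (hd : 2 ≤ d) :
    IsRemovableBead (insert (x + d) (X.erase x)) (x + d) ↔ x + d - 1 ∉ X := by
  simp only [IsRemovableBead, Finset.mem_insert, Finset.mem_erase]
  grind

lemma moveBeadDown_top (hxd : x + d ∉ X) :
    moveBeadDown (insert (x + d) (X.erase x)) (x + d) = insert (x + d - 1) (X.erase x) := by
  ext a; simp only [moveBeadDown, Finset.mem_insert, Finset.mem_erase]; grind

lemma isRemovableBead_succ_iff (hd : 2 ≤ d) :
    IsRemovableBead (insert (x + d) (X.erase x)) (x + 1) ↔ x + 1 ∈ X := by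
  simp only [IsRemovableBead, Finset.mem_insert, Finset.mem_erase]
  grind

lemma moveBeadDown_succ (hd : 2 ≤ d) (hx : x ∈ X) :
    moveBeadDown (insert (x + d) (X.erase x)) (x + 1) = insert (x + d) (X.erase (x + 1)) := by
  ext a; simp only [moveBeadDown, Finset.mem_insert, Finset.mem_erase]; grind

lemma isRemovableBead_insert_erase_iff {y : ℕ}
    (hy : y ≠ x + d) (hy' : y ≠ x + 1) :
    IsRemovableBead (insert (x + d) (X.erase x)) y ↔
      IsRemovableBead X y ∧ y ≠ x ∧ y ≠ x + d + 1 := by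
  simp only [IsRemovableBead, Finset.mem_insert, Finset.mem_erase]
  grind

lemma moveBeadDown_insert_erase (hx : x ∈ X) (hxd : x + d ∉ X) {y : ℕ}
    (hy : IsRemovableBead X y) :
    moveBeadDown (insert (x + d) (X.erase x)) y = insert (x + d) ((moveBeadDown X y).erase x) := by
  obtain ⟨hyX, hy1, hy1X⟩ := hy
  ext a; simp only [moveBeadDown, Finset.mem_insert, Finset.mem_erase]; grind

lemma exists_isRemovableBead_insert_erase_iff (P : Finset ℕ → Prop) (hd : 2 ≤ d) (hx : x ∈ X)
    (hxd : x + d ∉ X) :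
    (∃ y, IsRemovableBead (insert (x + d) (X.erase x)) y ∧
        P (moveBeadDown (insert (x + d) (X.erase x)) y)) ↔
      ∃ Z, P Z ∧
        ((x + d - 1 ∉ X ∧ Z = insert (x + d - 1) (X.erase x)) ∨
         (x + 1 ∈ X ∧ Z = insert (x + d) (X.erase (x + 1))) ∨
         (∃ xj ∈ X, 1 ≤ xj ∧ xj - 1 ∉ X ∧ xj ≠ x ∧ xj ≠ x + d + 1 ∧
            Z = insert (x + d) ((insert (xj - 1) (X.erase xj)).erase x))) := by
  constructor
  · rintro ⟨y, hy, hP⟩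
    refine ⟨_, hP, ?_⟩
    by_cases htop : y = x + d
    · subst htop
      exact .inl ⟨(isRemovableBead_top_iff hd).1 hy, moveBeadDown_top hxd⟩
    by_cases hsucc : y = x + 1
    · subst hsucc
      exact .inr (.inl ⟨(isRemovableBead_succ_iff hd).1 hy, moveBeadDown_succ hd hx⟩)
    obtain ⟨hyX, hyx, hyd⟩ := (isRemovableBead_insert_erase_iff htop hsucc).1 hy
    exact .inr (.inr ⟨y, hyX.1, hyX.2.1, hyX.2.2, hyx, hyd, moveBeadDown_insert_erase hx hxd hyX⟩)
  · rintro ⟨Z, hP, ⟨htop, rfl⟩ | ⟨hsucc, rfl⟩ | ⟨y, hyX, hy1, hy1X, hyx, hyd, rfl⟩⟩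
    · exact ⟨x + d, (isRemovableBead_top_iff hd).2 htop, moveBeadDown_top hxd ▸ hP⟩
    · exact ⟨x + 1, (isRemovableBead_succ_iff hd).2 hsucc, moveBeadDown_succ hd hx ▸ hP⟩
    · have hy : IsRemovableBead X y := ⟨hyX, hy1, hy1X⟩
      refine ⟨y, (isRemovableBead_insert_erase_iff ?_ ?_).2 ⟨hy, hyx, hyd⟩,
        moveBeadDown_insert_erase hx hxd hy ▸ hP⟩
      · rintro rfl; exact hxd hyX
      · rintro rfl; exact hy1X (by simpa using hx)
end

theorem stmt19_general (d : ℕ) (hd : 2 ≤ d) (s : ℕ) (X : Finset ℕ)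
    (x : ℕ) (hx : x ∈ X) (hxd : x + d ∉ X)
    (lam : ℕ → ℕ) (hlam : HasBetaSet lam s (insert (x + d) (X.erase x))) :
    ∀ g : ℕ → ℕ, RemoveBox lam g ↔
      ∃ Z : Finset ℕ, HasBetaSet g s Z ∧
        ((x + d - 1 ∉ X ∧ Z = insert (x + d - 1) (X.erase x)) ∨
         (x + 1 ∈ X ∧ Z = insert (x + d) (X.erase (x + 1))) ∨
         (∃ xj ∈ X, 1 ≤ xj ∧ xj - 1 ∉ X ∧ xj ≠ x ∧ xj ≠ x + d + 1 ∧
            Z = insert (x + d) ((insert (xj - 1) (X.erase xj)).erase x))) := fun g =>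
  (hlam.removeBox_iff g).trans (exists_isRemovableBead_insert_erase_iff _ hd hx hxd)

/-- Let `d ≥ 2`, `μ` a partition with β-set `X` of size `s`, `x ∈ X` with `x + d ∉ X`,
and `λ = μ * x` the partition with β-set `Y = (X \ {x}) ∪ {x + d}`.  The partitions
obtained from `λ` by removing one box are exactly those whose β-set of size `s` is:
(i) `(X \ {x}) ∪ {x+d-1}`, occurring iff `x + d - 1 ∉ X`;
(ii) `(X \ {x+1}) ∪ {x+d}`, occurring iff `x + 1 ∈ X`;
(iii) `(X⁽ʲ⁾ \ {x}) ∪ {x+d}` where `X⁽ʲ⁾ = (X \ {x_j}) ∪ {x_j - 1}` for some `x_j ∈ X`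
with `x_j ≥ 1`, `x_j - 1 ∉ X`, `x_j ≠ x`, `x_j ≠ x + d + 1`. -/
theorem stmt19 (d : ℕ) (hd : 2 ≤ d) (mu : ℕ → ℕ) (s : ℕ) (X : Finset ℕ)
    (hmu : HasBetaSet mu s X) (x : ℕ) (hx : x ∈ X) (hxd : x + d ∉ X)
    (lam : ℕ → ℕ) (hlam : HasBetaSet lam s (insert (x + d) (X.erase x))) :
    ∀ g : ℕ → ℕ, RemoveBox lam g ↔
      ∃ Z : Finset ℕ, HasBetaSet g s Z ∧
        ((x + d - 1 ∉ X ∧ Z = insert (x + d - 1) (X.erase x)) ∨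
         (x + 1 ∈ X ∧ Z = insert (x + d) (X.erase (x + 1))) ∨
         (∃ xj ∈ X, 1 ≤ xj ∧ xj - 1 ∉ X ∧ xj ≠ x ∧ xj ≠ x + d + 1 ∧
            Z = insert (x + d) ((insert (xj - 1) (X.erase xj)).erase x))) :=
  stmt19_general d hd s X x hx hxd lam hlam
end
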